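/- For one-dimensional probability measures, the Wasserstein distance of order 1 satisfies W₁(μ, ν) = ∫_ℝ |F_μ(x) − F_ν(x)| dx, where F_μ and F_ν are the cumulative distribution functions. -/

import Mathlib

open MeasureTheory ENNReal Metric

noncomputable section

/-- `γ` is a coupling of `μ` and `ν`. -/
def IsCoupling {E F : Type*} [MeasurableSpace E] [MeasurableSpace F]
    (γ : Measure (E × F)) (μ : Measure E) (ν : Measure F) : Prop :=
  γ.map Prod.fst = μ ∧ γ.map Prod.snd = ν

/-- The `p`-th power of the Wasserstein distance of order `p`:
infimum over couplings of the `p`-cost. -/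
def WpCost (p : ℝ) {E : Type*} [NormedAddCommGroup E] [MeasurableSpace E]
    (μ ν : Measure E) : ℝ≥0∞ :=
  ⨅ (γ : Measure (E × E)) (_ : IsCoupling γ μ ν),
    ∫⁻ z, (‖z.1 - z.2‖₊ : ℝ≥0∞) ^ p ∂γ

/-- The Wasserstein distance of order `p`. -/
def Wp (p : ℝ) {E : Type*} [NormedAddCommGroup E] [MeasurableSpace E]
    (μ ν : Measure E) : ℝ≥0∞ := WpCost p μ ν ^ (1 / p)

abbrev Euc (d : ℕ) := EuclideanSpace ℝ (Fin d)

/-- Linear form associated with a direction `u`. -/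
def projDir {d : ℕ} (u : Euc d) : Euc d → ℝ := fun y => inner ℝ u y

/-- The `p`-th power of the Sliced-Wasserstein distance w.r.t. a measure `σu` on the sphere. -/
def SWpCost (p : ℝ) {d : ℕ} (σu : Measure (sphere (0 : Euc d) 1))
    (μ ν : Measure (Euc d)) : ℝ≥0∞ :=
  ∫⁻ u, WpCost p (μ.map (projDir (u : Euc d))) (ν.map (projDir (u : Euc d))) ∂σu

/-- Sliced-Wasserstein distance of order `p`. -/
def SWp (p : ℝ) {d : ℕ} (σu : Measure (sphere (0 : Euc d) 1))
    (μ ν : Measure (Euc d)) : ℝ≥0∞ := SWpCost p σu μ ν ^ (1 / p)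

/-- Centered isotropic Gaussian `N(0, σ² I_d)` on `ℝᵈ`. -/
def isoGaussian (d : ℕ) (σ : ℝ) : Measure (Euc d) :=
  (Measure.pi fun _ : Fin d => ProbabilityTheory.gaussianReal 0 (Real.toNNReal (σ ^ 2))).map
    (EuclideanSpace.equiv (Fin d) ℝ).symm

/-- Empirical measure of `m` points. -/
def empirical {E : Type*} [MeasurableSpace E] {m : ℕ} (z : Fin m → E) : Measure E :=
  (m : ℝ≥0∞)⁻¹ • ∑ i, Measure.dirac (z i)

/-- Quantile function (generalized inverse CDF). -/
def quantile (μ : Measure ℝ) (t : ℝ) : ℝ := sInf {x | t ≤ ProbabilityTheory.cdf μ x}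

/-- Finite `p`-th moment. -/
def FiniteMomentP (p : ℝ) {E : Type*} [NormedAddCommGroup E] [MeasurableSpace E]
    (μ : Measure E) : Prop := ∫⁻ y, (‖y‖₊ : ℝ≥0∞) ^ p ∂μ < ∞

/-- Rotation invariance of a measure on the unit sphere. -/
def SphereInvariant {d : ℕ} (σu : Measure (sphere (0 : Euc d) 1)) : Prop :=
  ∀ T : Euc d ≃ₗᵢ[ℝ] Euc d,
    σu.map (fun (u : sphere (0 : Euc d) 1) => (⟨T u, by
      rw [mem_sphere_zero_iff_norm, T.norm_map, ← mem_sphere_zero_iff_norm]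
      exact u.2⟩ : sphere (0 : Euc d) 1)) = σu


/-!
By Tonelli and `|x - y| = λ({t | x ≤ t} ∆ {t | y ≤ t})`, the cost of a coupling `γ` is
`∫ γ({z | z.1 ≤ t} ∆ {z | z.2 ≤ t}) dt`. For every coupling the integrand is at least
`|F_μ(t) - F_ν(t)|`, the difference of the measures of the two sets. For the quantile coupling,
the image of the uniform measure on `(0, 1)` under `u ↦ (F_μ⁻¹(u), F_ν⁻¹(u))`, the Galois property
`F⁻¹(u) ≤ t ↔ u ≤ F(t)` turns the integrand into the length of the interval between `F_μ(t)` and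
`F_ν(t)`, so equality holds.
-/

open ProbabilityTheory Set
open scoped symmDiff

section Intervals

variable {α : Type*} [LinearOrder α]

theorem Set.Iic_symmDiff_Iic (a b : α) : Iic a ∆ Iic b = uIoc a b := by
  ext x
  simp only [mem_symmDiff, mem_Iic, mem_uIoc, not_le]
  grind

theorem Set.Ici_symmDiff_Ici (a b : α) : Ici a ∆ Ici b = Ico (min a b) (max a b) := by
  ext x
  simp only [mem_symmDiff, mem_Ici, mem_Ico, min_le_iff, lt_max_iff, not_le]
  grind

end Intervals

theorem Real.volume_Ici_symmDiff_Ici (a b : ℝ) :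
    volume (Ici a ∆ Ici b) = ENNReal.ofReal |a - b| := by
  rw [Set.Ici_symmDiff_Ici, Real.volume_Ico, max_sub_min_eq_abs']

theorem MeasureTheory.Measure.restrict_Ioo_apply_of_subset_Icc {α : Type*} [MeasurableSpace α]
    [PartialOrder α] {μ : Measure α} [NullSingletonClass μ] {a b : α} {s : Set α}
    (hs : s ⊆ Icc a b) : μ.restrict (Ioo a b) s = μ s := by
  rw [Measure.restrict_congr_set Ioo_ae_eq_Icc, Measure.restrict_eq_self _ hs]

theorem MeasureTheory.Measure.restrict_apply_congr {α : Type*} [MeasurableSpace α]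
    {μ : Measure α} {r s t : Set α} (hr : MeasurableSet r) (h : ∀ x ∈ r, x ∈ s ↔ x ∈ t) :
    μ.restrict r s = μ.restrict r t := by
  rw [Measure.restrict_apply' hr, Measure.restrict_apply' hr]
  congr 1
  ext x
  exact and_congr_left (h x)

theorem lintegral_ofReal_abs_sub_eq_lintegral_measure_symmDiff {α : Type*} [MeasurableSpace α]
    (m : Measure α) [SFinite m] {f g : α → ℝ} (hf : Measurable f) (hg : Measurable g) :
    ∫⁻ a, ENNReal.ofReal |f a - g a| ∂m = ∫⁻ t, m ({a | f a ≤ t} ∆ {a | g a ≤ t}) := by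
  set S : Set (α × ℝ) := {p | f p.1 ≤ p.2} ∆ {p | g p.1 ≤ p.2}
  have hS : MeasurableSet S :=
    (measurableSet_le (hf.comp measurable_fst) measurable_snd).symmDiff
      (measurableSet_le (hg.comp measurable_fst) measurable_snd)
  calc ∫⁻ a, ENNReal.ofReal |f a - g a| ∂m = ∫⁻ a, volume (Prod.mk a ⁻¹' S) ∂m := by
        simp only [S, preimage_symmDiff]
        exact lintegral_congr fun a => (Real.volume_Ici_symmDiff_Ici (f a) (g a)).symm
    _ = m.prod volume S := (Measure.prod_apply hS).symm
    _ = ∫⁻ t, m ({a | f a ≤ t} ∆ {a | g a ≤ t}) := Measure.prod_apply_symm hS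

section Quantile

variable (μ : Measure ℝ)

theorem quantile_le_iff {u : ℝ} (hu : u ∈ Ioo 0 1) (t : ℝ) :
    quantile μ u ≤ t ↔ u ≤ cdf μ t := by
  set S := {x | u ≤ cdf μ x}
  have hne : S.Nonempty := ((tendsto_cdf_atTop μ).eventually_const_le hu.2).exists
  have hbdd : BddBelow S := by
    obtain ⟨x₀, hx₀⟩ := ((tendsto_cdf_atBot μ).eventually_lt_const hu.1).exists
    exact ⟨x₀, fun x hx => le_of_not_gt fun hlt =>
      (hx.trans_lt ((monotone_cdf μ hlt.le).trans_lt hx₀)).false⟩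
  have hmem : sInf S ∈ S := by
    refine ge_of_tendsto (((cdf μ).right_continuous _).mono Ioi_subset_Ici_self) ?_
    filter_upwards [self_mem_nhdsWithin] with x hx
    obtain ⟨s, hs, hsx⟩ := exists_lt_of_csInf_lt hne hx
    exact hs.trans (monotone_cdf μ hsx.le)
  exact ⟨fun h => hmem.trans (monotone_cdf μ h), fun h => csInf_le hbdd h⟩

theorem monotoneOn_quantile : MonotoneOn (quantile μ) (Ioo 0 1) := fun _ hu _ hv huv =>
  (quantile_le_iff μ hu _).2 (huv.trans ((quantile_le_iff μ hv _).1 le_rfl))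

theorem aemeasurable_quantile : AEMeasurable (quantile μ) (volume.restrict (Ioo 0 1)) :=
  aemeasurable_restrict_of_monotoneOn measurableSet_Ioo (monotoneOn_quantile μ)

theorem map_quantile_volume_Ioo [IsProbabilityMeasure μ] :
    (volume.restrict (Ioo 0 1)).map (quantile μ) = μ := by
  refine (Measure.ext_of_Iic μ _ fun t => ?_).symm
  rw [Measure.map_apply_of_aemeasurable (aemeasurable_quantile μ) measurableSet_Iic,
    ← ofReal_cdf, Measure.restrict_apply_congr (s := quantile μ ⁻¹' Iic t)
      (t := Ioc 0 (cdf μ t)) measurableSet_Ioo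
      fun u hu => (quantile_le_iff μ hu t).trans (and_iff_right hu.1).symm,
    Measure.restrict_Ioo_apply_of_subset_Icc (Ioc_subset_Icc_self.trans
      (Icc_subset_Icc_right (cdf_le_one μ t))), Real.volume_Ioc, sub_zero]

end Quantile

theorem IsCoupling.isFiniteMeasure {E F : Type*} [MeasurableSpace E] [MeasurableSpace F]
    {γ : Measure (E × F)} {μ : Measure E} {ν : Measure F} [IsFiniteMeasure μ]
    (hγ : IsCoupling γ μ ν) : IsFiniteMeasure γ := by
  refine ⟨?_⟩
  rw [← preimage_univ (f := Prod.fst), ← Measure.map_apply measurable_fst .univ, hγ.1]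
  exact measure_lt_top μ _

section QuantileCoupling

variable (μ ν : Measure ℝ)

/-- `quantile μ` takes junk values outside `(0, 1)`, a set this coupling does not charge. -/
def quantileCoupling : Measure (ℝ × ℝ) :=
  (volume.restrict (Ioo 0 1)).map fun u => (quantile μ u, quantile ν u)

theorem aemeasurable_quantile_prod :
    AEMeasurable (fun u => (quantile μ u, quantile ν u)) (volume.restrict (Ioo 0 1)) :=
  (aemeasurable_quantile μ).prodMk (aemeasurable_quantile ν)

theorem isCoupling_quantileCoupling [IsProbabilityMeasure μ] [IsProbabilityMeasure ν] :
    IsCoupling (quantileCoupling μ ν) μ ν := by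
  constructor
  · rw [quantileCoupling, AEMeasurable.map_map_of_aemeasurable measurable_fst.aemeasurable
      (aemeasurable_quantile_prod μ ν)]
    exact map_quantile_volume_Ioo μ
  · rw [quantileCoupling, AEMeasurable.map_map_of_aemeasurable measurable_snd.aemeasurable
      (aemeasurable_quantile_prod μ ν)]
    exact map_quantile_volume_Ioo ν

theorem lintegral_quantileCoupling :
    ∫⁻ z, ENNReal.ofReal |z.1 - z.2| ∂quantileCoupling μ ν
      = ∫⁻ t, ENNReal.ofReal |cdf μ t - cdf ν t| := by
  rw [quantileCoupling,
    lintegral_ofReal_abs_sub_eq_lintegral_measure_symmDiff _ measurable_fst measurable_snd]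
  refine lintegral_congr fun t => ?_
  have hcdf : uIoc (cdf μ t) (cdf ν t) ⊆ Icc 0 1 := uIoc_subset_uIcc.trans
    (uIcc_subset_Icc ⟨cdf_nonneg μ t, cdf_le_one μ t⟩ ⟨cdf_nonneg ν t, cdf_le_one ν t⟩)
  rw [Measure.map_apply_of_aemeasurable (aemeasurable_quantile_prod μ ν)
      ((measurableSet_le measurable_fst measurable_const).symmDiff
        (measurableSet_le measurable_snd measurable_const)),
    preimage_symmDiff, Measure.restrict_apply_congr (t := Iic (cdf μ t) ∆ Iic (cdf ν t))
      measurableSet_Ioo fun u hu => ?_, Iic_symmDiff_Iic,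
    Measure.restrict_Ioo_apply_of_subset_Icc hcdf, Real.volume_uIoc, abs_sub_comm]
  simp only [mem_symmDiff, mem_preimage, mem_ofPred_eq, mem_Iic, quantile_le_iff μ hu,
    quantile_le_iff ν hu]

end QuantileCoupling

section LowerBound

variable {μ ν : Measure ℝ} [IsProbabilityMeasure μ] [IsProbabilityMeasure ν]
  {γ : Measure (ℝ × ℝ)}

theorem IsCoupling.ofReal_abs_cdf_sub_cdf_le (hγ : IsCoupling γ μ ν) (t : ℝ) :
    ENNReal.ofReal |cdf μ t - cdf ν t| ≤ γ ({z | z.1 ≤ t} ∆ {z | z.2 ≤ t}) := by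
  have hμ : γ {z | z.1 ≤ t} = ENNReal.ofReal (cdf μ t) := by
    rw [ofReal_cdf, ← hγ.1, Measure.map_apply measurable_fst measurableSet_Iic]; rfl
  have hν : γ {z | z.2 ≤ t} = ENNReal.ofReal (cdf ν t) := by
    rw [ofReal_cdf, ← hγ.2, Measure.map_apply measurable_snd measurableSet_Iic]; rfl
  rcases le_total (cdf ν t) (cdf μ t) with h | h
  · rw [abs_of_nonneg (sub_nonneg.2 h), ENNReal.ofReal_sub _ (cdf_nonneg ν t), ← hμ, ← hν]
    exact le_measure_symmDiff
  · rw [abs_of_nonpos (sub_nonpos.2 h), neg_sub, ENNReal.ofReal_sub _ (cdf_nonneg μ t), ← hμ,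
      ← hν, symmDiff_comm]
    exact le_measure_symmDiff

theorem IsCoupling.lintegral_abs_cdf_sub_cdf_le (hγ : IsCoupling γ μ ν) :
    ∫⁻ t, ENNReal.ofReal |cdf μ t - cdf ν t| ≤ ∫⁻ z, ENNReal.ofReal |z.1 - z.2| ∂γ := by
  have := hγ.isFiniteMeasure
  rw [lintegral_ofReal_abs_sub_eq_lintegral_measure_symmDiff γ measurable_fst measurable_snd]
  exact lintegral_mono hγ.ofReal_abs_cdf_sub_cdf_le

end LowerBound

theorem wpCost_one_eq_iInf (μ ν : Measure ℝ) :
    WpCost 1 μ ν = ⨅ (γ) (_ : IsCoupling γ μ ν), ∫⁻ z, ENNReal.ofReal |z.1 - z.2| ∂γ := by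
  simp only [WpCost, ENNReal.rpow_one, ← enorm_eq_nnnorm, Real.enorm_eq_ofReal_abs]

theorem stmt18_general (μ ν : Measure ℝ) [IsProbabilityMeasure μ] [IsProbabilityMeasure ν] :
    WpCost 1 μ ν
      = ∫⁻ x : ℝ,
          ENNReal.ofReal |ProbabilityTheory.cdf μ x - ProbabilityTheory.cdf ν x| := by
  rw [wpCost_one_eq_iInf]
  refine le_antisymm ?_ (le_iInf₂ fun γ hγ => hγ.lintegral_abs_cdf_sub_cdf_le)
  exact (iInf₂_le (quantileCoupling μ ν) (isCoupling_quantileCoupling μ ν)).trans_eq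
    (lintegral_quantileCoupling μ ν)

/-- CDF formula for the 1D Wasserstein distance of order 1:
W₁(μ, ν) = ∫ |F_μ(x) − F_ν(x)| dx. -/
theorem stmt18 (μ ν : Measure ℝ) [IsProbabilityMeasure μ] [IsProbabilityMeasure ν]
    (hμ : FiniteMomentP 1 μ) (hν : FiniteMomentP 1 ν) :
    WpCost 1 μ ν
      = ∫⁻ x : ℝ,
          ENNReal.ofReal |ProbabilityTheory.cdf μ x - ProbabilityTheory.cdf ν x| :=
  stmt18_general μ ν
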